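/- Let H be a Hilbert space, D ⊆ H a dense subspace, T : D → H an essentially self-adjoint operator, and S : H → H a bounded operator with bounded inverse. Then the operator S* T S, defined on S⁻¹D, is essentially self-adjoint. -/

import Mathlib

open Complex

/-- A densely defined unbounded operator is *self-adjoint* if it coincides with
its adjoint. -/
def IsSelfAdjointPMap {H : Type*} [NormedAddCommGroup H] [InnerProductSpace ℂ H]
    [CompleteSpace H] (T : H →ₗ.[ℂ] H) : Prop :=
  T.adjoint = T

/-- A densely defined unbounded operator is *essentially self-adjoint* if its
closure is self-adjoint; equivalently, if its adjoint is self-adjoint. -/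
def IsEssentiallySelfAdjoint {H : Type*} [NormedAddCommGroup H]
    [InnerProductSpace ℂ H] [CompleteSpace H] (T : H →ₗ.[ℂ] H) : Prop :=
  IsSelfAdjointPMap T.adjoint

/-! The adjoint of `S† A S` on `S⁻¹ (dom A)` is `S† A† S` on `S⁻¹ (dom A†)` when `S` is
invertible; the backward inclusion is a direct computation, and the forward one is the
same computation for `A = (S⁻¹)† B S⁻¹`. Applying this twice, `T'†` and `T'††` are both the
conjugate of `T† = T††`, hence equal. -/

namespace LinearPMap

variable {𝕜 E F : Type*} [RCLike 𝕜]
  [NormedAddCommGroup E] [InnerProductSpace 𝕜 E] [CompleteSpace E]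
  [NormedAddCommGroup F] [InnerProductSpace 𝕜 F] [CompleteSpace F]

local notation "⟪" x ", " y "⟫" => inner 𝕜 x y

/-- `B` is the congruence `S† A S`, with domain `S⁻¹ (dom A)`. -/
structure IsCongruence (S : E →L[𝕜] F) (A : F →ₗ.[𝕜] F) (B : E →ₗ.[𝕜] E) :
    Prop where
  mem_domain_iff : ∀ u, u ∈ B.domain ↔ S u ∈ A.domain
  apply_eq : ∀ u (hu : u ∈ B.domain) (hSu : S u ∈ A.domain),
    B ⟨u, hu⟩ = S.adjoint (A ⟨S u, hSu⟩)

namespace IsCongruence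

variable {S : E →L[𝕜] F} {A : F →ₗ.[𝕜] F} {B B' : E →ₗ.[𝕜] E}

theorem unique (h : IsCongruence S A B) (h' : IsCongruence S A B') : B = B' := by
  apply LinearPMap.ext
  · ext u
    rw [h.mem_domain_iff, h'.mem_domain_iff]
  · intro u hu hu'
    have hSu : S u ∈ A.domain := (h.mem_domain_iff u).mp hu
    rw [h.apply_eq u hu hSu, h'.apply_eq u hu' hSu]

theorem dense_domain {e : E ≃L[𝕜] F} (h : IsCongruence (e : E →L[𝕜] F) A B)
    (hA : Dense (A.domain : Set F)) : Dense (B.domain : Set E) := by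
  have hpre : (B.domain : Set E) = e ⁻¹' A.domain := Set.ext h.mem_domain_iff
  rw [hpre]
  exact hA.preimage e.toHomeomorph.isOpenMap

theorem symm {e : E ≃L[𝕜] F} (h : IsCongruence (e : E →L[𝕜] F) A B) :
    IsCongruence (e.symm : F →L[𝕜] E) B A where
  mem_domain_iff u := by
    rw [h.mem_domain_iff]
    simp
  apply_eq u hu hu' := by
    have hadj : (e.symm : F →L[𝕜] E).adjoint ∘L (e : E →L[𝕜] F).adjoint = .id 𝕜 F := by
      rw [← ContinuousLinearMap.adjoint_comp, e.coe_comp_coe_symm,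
        ContinuousLinearMap.adjoint_id]
    rw [h.apply_eq _ hu' (by simpa using hu), ← ContinuousLinearMap.comp_apply, hadj]
    simp

theorem inner_adjoint_apply (h : IsCongruence S A B) (hA : Dense (A.domain : Set F))
    {v : E} (hSv : S v ∈ A†.domain) (u : B.domain) :
    ⟪S.adjoint (A† ⟨S v, hSv⟩), (u : E)⟫ = ⟪v, B u⟫ := by
  have hSu : S u ∈ A.domain := (h.mem_domain_iff u).mp u.2
  calc ⟪S.adjoint (A† ⟨S v, hSv⟩), (u : E)⟫
      = ⟪A† ⟨S v, hSv⟩, S u⟫ := ContinuousLinearMap.adjoint_inner_left _ _ _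
    _ = ⟪S v, A ⟨S u, hSu⟩⟫ := adjoint_isFormalAdjoint hA ⟨S v, hSv⟩ ⟨S u, hSu⟩
    _ = ⟪v, S.adjoint (A ⟨S u, hSu⟩)⟫ :=
        (ContinuousLinearMap.adjoint_inner_right _ _ _).symm
    _ = ⟪v, B u⟫ := by rw [h.apply_eq u u.2 hSu]

theorem mem_adjoint_domain (h : IsCongruence S A B) (hA : Dense (A.domain : Set F))
    {v : E} (hSv : S v ∈ A†.domain) : v ∈ B†.domain :=
  mem_adjoint_domain_of_exists v ⟨_, h.inner_adjoint_apply hA hSv⟩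

theorem adjoint {e : E ≃L[𝕜] F} (h : IsCongruence (e : E →L[𝕜] F) A B)
    (hA : Dense (A.domain : Set F)) (hB : Dense (B.domain : Set E)) :
    IsCongruence (e : E →L[𝕜] F) A† B† where
  mem_domain_iff v := by
    refine ⟨fun hv => ?_, h.mem_adjoint_domain hA⟩
    apply h.symm.mem_adjoint_domain hB
    simpa using hv
  apply_eq v hv hSv := adjoint_apply_eq hB ⟨v, hv⟩ (h.inner_adjoint_apply hA hSv)

end IsCongruence

end LinearPMap

/-- If `T` is essentially self-adjoint on the dense domain `D` and
`S` is bounded with bounded inverse, then `S* T S`, defined on `S⁻¹ D`, is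
essentially self-adjoint. -/
theorem essSelfAdjoint_of_conjugate {H : Type*} [NormedAddCommGroup H]
    [InnerProductSpace ℂ H] [CompleteSpace H]
    (T : H →ₗ.[ℂ] H) (hdense : Dense (T.domain : Set H))
    (hT : IsEssentiallySelfAdjoint T)
    (S : H →L[ℂ] H) (Sinv : H →L[ℂ] H)
    (hS₁ : S ∘L Sinv = ContinuousLinearMap.id ℂ H)
    (hS₂ : Sinv ∘L S = ContinuousLinearMap.id ℂ H)
    (T' : H →ₗ.[ℂ] H)
    (hdom : ∀ u : H, u ∈ T'.domain ↔ S u ∈ T.domain)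
    (happ : ∀ (u : H) (hu : u ∈ T'.domain) (hSu : S u ∈ T.domain),
      T' ⟨u, hu⟩ = ContinuousLinearMap.adjoint S (T ⟨S u, hSu⟩)) :
    IsEssentiallySelfAdjoint T' := by
  let e : H ≃L[ℂ] H := .equivOfInverse' S Sinv hS₁ hS₂
  have hconj : LinearPMap.IsCongruence (e : H →L[ℂ] H) T T' := ⟨hdom, happ⟩
  have hTadj_dense : Dense (T.adjoint.domain : Set H) := IsSelfAdjoint.dense_domain hT
  have hconj_adj := hconj.adjoint hdense (hconj.dense_domain hdense)
  have hconj_adj_adj := hconj_adj.adjoint hTadj_dense (hconj_adj.dense_domain hTadj_dense)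
  rw [show T.adjoint.adjoint = T.adjoint from hT] at hconj_adj_adj
  exact hconj_adj_adj.unique hconj_adj
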